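/- arXiv:math/0001003 — 6 statements merged into one kernel-verified Lean document; each statement's English description precedes it below -/
import Mathlib

section
/- With p_n(q) defined as the sum over compositions of n as above, the coefficient of q^1 in p_n(q) equals 2^n − n − 1 for all n ≥ 1. -/
/-!
Write `B_n = p_n / n!` (and `B_0 = 1`). Splitting off the first block of a composition gives
`B_{n+1} = ∑_{k=0}^{n} (q-1)^k / (k+1)! · B_{n-k}`. Since `(q-1)^k = (-1)^k (1 - k q) + O(q²)`,
the coefficients of `q^0` and `q^1` of `n! B_n` satisfy binomial recurrences, and the binomial
expansions of `(1-1)^{n+1}` and `(2-1)^{n+1}` show inductively that they are `1` and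
`2^n - n - 1`.
-/

open Polynomial

/-- `p_n(q) = n! ∑_{l=1}^{n} ∑_{s_1+…+s_l=n, s_i≥1} ∏_i (q-1)^{s_i-1}/s_i!`. -/
noncomputable def pPoly (n : ℕ) : Polynomial ℚ :=
  (n.factorial : ℚ) •
    ∑ l ∈ Finset.Icc 1 n,
      ∑ s ∈ (Finset.Nat.antidiagonalTuple l n).filter (fun s => ∀ i, 1 ≤ s i),
        ∏ i, ((X - 1) ^ (s i - 1) * C (((s i).factorial : ℚ)⁻¹))

open Finset

section Compositions

variable {R : Type*} [CommSemiring R]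

def compositionTuples (l n : ℕ) : Finset (Fin l → ℕ) :=
  (Nat.antidiagonalTuple l n).filter fun s => ∀ i, 1 ≤ s i

def compositionSumOfLength (f : ℕ → R) (l n : ℕ) : R :=
  ∑ s ∈ compositionTuples l n, ∏ i, f (s i)

/-- The term `l = 0` is the empty composition, so that `compositionSum f 0 = 1`. -/
def compositionSum (f : ℕ → R) (n : ℕ) : R :=
  ∑ l ∈ range (n + 1), compositionSumOfLength f l n

variable (f : ℕ → R)

theorem compositionTuples_eq_empty {l n : ℕ} (h : n < l) : compositionTuples l n = ∅ := by
  refine eq_empty_of_forall_notMem fun s hs => ?_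
  simp only [compositionTuples, mem_filter, Nat.mem_antidiagonalTuple] at hs
  have : l ≤ n :=
    calc l = ∑ _i : Fin l, 1 := by simp
      _ ≤ ∑ i, s i := sum_le_sum fun i _ => hs.2 i
      _ = n := hs.1
  omega

theorem compositionSumOfLength_of_lt {l n : ℕ} (h : n < l) :
    compositionSumOfLength f l n = 0 := by
  simp [compositionSumOfLength, compositionTuples_eq_empty h]

theorem compositionSumOfLength_zero_zero : compositionSumOfLength f 0 0 = 1 := by
  simp [compositionSumOfLength, compositionTuples, Nat.antidiagonalTuple_zero_zero]

theorem compositionSumOfLength_zero_succ (n : ℕ) : compositionSumOfLength f 0 (n + 1) = 0 := by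
  simp [compositionSumOfLength, compositionTuples, Nat.antidiagonalTuple_zero_succ]

theorem compositionSumOfLength_succ (l n : ℕ) :
    compositionSumOfLength f (l + 1) n =
      ∑ k ∈ range n, f (k + 1) * compositionSumOfLength f l (n - (k + 1)) := by
  simp only [compositionSumOfLength, mul_sum]
  rw [sum_sigma']
  refine sum_bij' (fun s _ => ⟨s 0 - 1, Fin.tail s⟩) (fun p _ => Fin.cons (p.1 + 1) p.2)
    ?_ ?_ ?_ ?_ ?_
  · intro s hs
    simp only [compositionTuples, mem_filter, Nat.mem_antidiagonalTuple, Fin.sum_univ_succ] at hs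
    have := hs.2 0
    simp only [compositionTuples, mem_sigma, mem_range, mem_filter, Nat.mem_antidiagonalTuple]
    exact ⟨by omega, by simp only [Fin.tail]; omega, fun i => hs.2 i.succ⟩
  · intro p hp
    simp only [compositionTuples, mem_sigma, mem_range, mem_filter,
      Nat.mem_antidiagonalTuple] at hp
    simp only [compositionTuples, mem_filter, Nat.mem_antidiagonalTuple, Fin.sum_univ_succ,
      Fin.cons_zero, Fin.cons_succ]
    exact ⟨by omega, Fin.cases (by simp) fun i => by simpa using hp.2.2 i⟩
  · intro s hs
    simp only [compositionTuples, mem_filter] at hs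
    dsimp only
    rw [Nat.sub_add_cancel (hs.2 0), Fin.cons_self_tail]
  · intro p _
    simp
  · intro s hs
    simp only [compositionTuples, mem_filter] at hs
    rw [Fin.prod_univ_succ, Nat.sub_add_cancel (hs.2 0)]
    rfl

theorem compositionSum_zero : compositionSum f 0 = 1 := by
  simp [compositionSum, compositionSumOfLength_zero_zero]

theorem compositionSum_eq_sum_range {n N : ℕ} (h : n ≤ N) :
    compositionSum f n = ∑ l ∈ range (N + 1), compositionSumOfLength f l n :=
  sum_subset (range_subset_range.2 (by omega)) fun l _ hl =>
    compositionSumOfLength_of_lt f (by simpa using hl)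

theorem compositionSum_succ (n : ℕ) :
    compositionSum f (n + 1) = ∑ k ∈ range (n + 1), f (k + 1) * compositionSum f (n - k) := by
  rw [compositionSum, sum_range_succ', compositionSumOfLength_zero_succ, add_zero]
  simp only [compositionSumOfLength_succ, Nat.add_sub_add_right]
  rw [sum_comm]
  refine sum_congr rfl fun k _ => ?_
  rw [← mul_sum, compositionSum_eq_sum_range f (Nat.sub_le n k)]

end Compositions

theorem sum_range_neg_one_pow_mul_choose_succ_mul_pow {R : Type*} [CommRing R] (x : R) (n : ℕ) :
    ∑ k ∈ range (n + 1), (-1) ^ k * ((n + 1).choose (k + 1) : R) * x ^ (n - k) =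
      x ^ (n + 1) - (x - 1) ^ (n + 1) := by
  have h := add_pow (-1) x (n + 1)
  rw [neg_add_eq_sub, sum_range_succ'] at h
  simp only [pow_succ (-1 : R), Nat.add_sub_add_right, pow_zero, one_mul, Nat.choose_zero_right,
    Nat.cast_one, mul_one, Nat.sub_zero] at h
  rw [h, sub_add_cancel_right, ← sum_neg_distrib]
  refine sum_congr rfl fun k _ => ?_
  ring

theorem sum_range_neg_one_pow_mul_choose_succ {R : Type*} [CommRing R] (n : ℕ) :
    ∑ k ∈ range (n + 1), (-1) ^ k * ((n + 1).choose (k + 1) : R) = 1 := by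
  simpa using sum_range_neg_one_pow_mul_choose_succ_mul_pow (1 : R) n

theorem inv_factorial_mul_inv_factorial_eq_choose {K : Type*} [Field K] [CharZero K] {k n : ℕ}
    (hk : k ≤ n) :
    ((k + 1).factorial : K)⁻¹ * ((n - k).factorial : K)⁻¹ =
      ((n + 1).factorial : K)⁻¹ * (n + 1).choose (k + 1) := by
  have : ((n + 1).factorial : K) ≠ 0 := Nat.cast_ne_zero.2 (Nat.factorial_ne_zero _)
  rw [Nat.cast_choose K (by omega : k + 1 ≤ n + 1), Nat.add_sub_add_right]
  field_simp

namespace Polynomial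

variable {R : Type*} [CommRing R]

theorem coeff_zero_X_sub_one_pow (k : ℕ) : ((X - 1 : R[X]) ^ k).coeff 0 = (-1) ^ k := by
  simp [coeff_zero_eq_eval_zero]

theorem coeff_one_X_sub_one_pow (k : ℕ) : ((X - 1 : R[X]) ^ k).coeff 1 = -k * (-1) ^ k := by
  induction k with
  | zero => simp [coeff_one]
  | succ k ih =>
    have h0 : (X - 1 : R[X]).coeff 0 = -1 := by simp
    have h1 : (X - 1 : R[X]).coeff 1 = 1 := by simp [coeff_one]
    rw [pow_succ, mul_coeff_one, ih, coeff_zero_X_sub_one_pow, h0, h1]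
    push_cast
    ring

end Polynomial

noncomputable def blockWeight (s : ℕ) : ℚ[X] :=
  (X - 1) ^ (s - 1) * C ((s.factorial : ℚ)⁻¹)

theorem pPoly_eq_smul_compositionSum {n : ℕ} (hn : 1 ≤ n) :
    pPoly n = (n.factorial : ℚ) • compositionSum blockWeight n := by
  obtain ⟨m, rfl⟩ := Nat.exists_eq_add_of_le' hn
  rw [compositionSum, range_eq_Ico, sum_eq_sum_Ico_succ_bot (by omega),
    compositionSumOfLength_zero_succ, zero_add, Ico_add_one_right_eq_Icc]
  rfl

theorem coeff_zero_blockWeight (k : ℕ) :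
    (blockWeight (k + 1)).coeff 0 = (-1) ^ k * ((k + 1).factorial : ℚ)⁻¹ := by
  rw [blockWeight, coeff_mul_C, Nat.add_sub_cancel, coeff_zero_X_sub_one_pow]

theorem coeff_one_blockWeight (k : ℕ) :
    (blockWeight (k + 1)).coeff 1 = -k * (-1) ^ k * ((k + 1).factorial : ℚ)⁻¹ := by
  rw [blockWeight, coeff_mul_C, Nat.add_sub_cancel, coeff_one_X_sub_one_pow]

theorem coeff_zero_compositionSum_blockWeight (n : ℕ) :
    (compositionSum blockWeight n).coeff 0 = (n.factorial : ℚ)⁻¹ := by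
  induction n using Nat.strong_induction_on with
  | _ n ih =>
    cases n with
    | zero => simp [compositionSum_zero]
    | succ n =>
      have term : ∀ k ∈ range (n + 1),
          (blockWeight (k + 1) * compositionSum blockWeight (n - k)).coeff 0 =
            ((n + 1).factorial : ℚ)⁻¹ * ((-1) ^ k * (n + 1).choose (k + 1)) := by
        intro k hk
        rw [mem_range] at hk
        rw [mul_coeff_zero, coeff_zero_blockWeight, ih _ (by omega)]
        linear_combination (-1 : ℚ) ^ k * inv_factorial_mul_inv_factorial_eq_choose (K := ℚ)
          (by omega : k ≤ n)
      rw [compositionSum_succ, finsetSum_coeff, sum_congr rfl term, ← mul_sum,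
        sum_range_neg_one_pow_mul_choose_succ, mul_one]

theorem coeff_one_compositionSum_blockWeight (n : ℕ) :
    (compositionSum blockWeight n).coeff 1 = (2 ^ n - n - 1) * (n.factorial : ℚ)⁻¹ := by
  induction n using Nat.strong_induction_on with
  | _ n ih =>
    cases n with
    | zero => simp [compositionSum_zero, coeff_one]
    | succ n =>
      have term : ∀ k ∈ range (n + 1),
          (blockWeight (k + 1) * compositionSum blockWeight (n - k)).coeff 1 =
            ((n + 1).factorial : ℚ)⁻¹ * ((-1) ^ k * (n + 1).choose (k + 1) * 2 ^ (n - k)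
              - (n + 1) * ((-1) ^ k * (n + 1).choose (k + 1))) := by
        intro k hk
        rw [mem_range] at hk
        rw [mul_coeff_one, coeff_zero_blockWeight, coeff_one_blockWeight, ih _ (by omega),
          coeff_zero_compositionSum_blockWeight, Nat.cast_sub (by omega : k ≤ n)]
        linear_combination ((-1) ^ k * (2 ^ (n - k) - n - 1 : ℚ)) *
          inv_factorial_mul_inv_factorial_eq_choose (K := ℚ) (by omega : k ≤ n)
      have expansion_at_two := sum_range_neg_one_pow_mul_choose_succ_mul_pow (2 : ℚ) n
      rw [show (2 : ℚ) - 1 = 1 by norm_num, one_pow] at expansion_at_two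
      rw [compositionSum_succ, finsetSum_coeff, sum_congr rfl term, ← mul_sum, sum_sub_distrib,
        ← mul_sum, sum_range_neg_one_pow_mul_choose_succ, expansion_at_two]
      push_cast
      ring

/-- The coefficient of `q^1` in `p_n(q)` equals `2^n - n - 1` for all `n ≥ 1`. -/
theorem stmt_2 (n : ℕ) (hn : 1 ≤ n) :
    (pPoly n).coeff 1 = (2 : ℚ) ^ n - n - 1 := by
  rw [pPoly_eq_smul_compositionSum hn, coeff_smul, coeff_one_compositionSum_blockWeight,
    smul_eq_mul]
  field_simp
end

section
/- With p_n(q) as above, p_n(q) is a polynomial of degree n−1 in q whose coefficients are the Eulerian numbers: the coefficient of q^i in p_n(q) equals the number of permutations of {1,...,n} with exactly i descents. -/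
open Polynomial

/-- The number of descents of a permutation `σ` of `Fin n`. -/
noncomputable def descents (n : ℕ) (σ : Equiv.Perm (Fin n)) : ℕ :=
  Nat.card {kk : Fin n // ∃ hk : kk.val + 1 < n, σ ⟨kk.val + 1, hk⟩ < σ kk}

/-!
Expanding the definition over compositions `s` of `n`, the factor `n! / ∏ sᵢ!` counts the
permutations increasing on every block of `s`, i.e. those whose descent set `D` is contained
in the set `B(s)` of inner block boundaries. Exchanging the sums, a permutation with descent
set `D` contributes `∑_{B ⊇ D} (q - 1)^(n - 1 - |B|) = q^(n - 1 - |D|)`. Finally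
`σ ↦ rev ∘ σ` complements descent sets, which turns `q^(n - 1 - des σ)` into `q^(des σ)`.
-/

open Finset Equiv

variable {n : ℕ}

def descentSet (σ : Perm (Fin n)) : Finset (Fin (n - 1)) :=
  {j | σ ⟨j + 1, by omega⟩ < σ ⟨j, by omega⟩}

theorem mem_descentSet {σ : Perm (Fin n)} {j : Fin (n - 1)} :
    j ∈ descentSet σ ↔ σ ⟨j + 1, by omega⟩ < σ ⟨j, by omega⟩ := by
  simp [descentSet]

theorem descents_eq_card_descentSet (σ : Perm (Fin n)) : descents n σ = #(descentSet σ) := by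
  rw [descents, Nat.card_eq_fintype_card, Fintype.card_subtype]
  refine card_bij' (fun k hk => ⟨k, by obtain ⟨-, h, -⟩ := mem_filter.1 hk; omega⟩)
    (fun j _ => ⟨j, by omega⟩) (fun k hk => ?_) (fun j hj => ?_) (fun _ _ => rfl)
    (fun _ _ => rfl)
  · obtain ⟨-, -, hk⟩ := mem_filter.1 hk
    exact mem_descentSet.2 hk
  · simpa using ⟨by omega, mem_descentSet.1 hj⟩

theorem descentSet_revPerm_mul (σ : Perm (Fin n)) :
    descentSet (Fin.revPerm * σ) = (descentSet σ)ᶜ := by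
  ext j
  have hne : σ ⟨j, by omega⟩ ≠ σ ⟨j + 1, by omega⟩ :=
    σ.injective.ne (by simp [Fin.ext_iff])
  simp only [mem_descentSet, mem_compl, Perm.mul_apply, Fin.revPerm_apply, Fin.rev_lt_rev, not_lt]
  exact ⟨le_of_lt, fun h => lt_of_le_of_ne h hne⟩

theorem descentSet_one : descentSet (1 : Perm (Fin n)) = ∅ := by
  ext j
  simp [mem_descentSet, Fin.mk_lt_mk]

theorem sum_descentSet_compl {M : Type*} [AddCommMonoid M] (f : Finset (Fin (n - 1)) → M) :
    ∑ σ : Perm (Fin n), f (descentSet σ)ᶜ = ∑ σ : Perm (Fin n), f (descentSet σ) := by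
  simp_rw [← descentSet_revPerm_mul]
  exact Equiv.sum_comp (Equiv.mulLeft Fin.revPerm) (fun σ => f (descentSet σ))

theorem Fin.strictMono_of_lt_add_one {α : Type*} [Preorder α] {m : ℕ} {f : Fin m → α}
    (h : ∀ k (hk : k + 1 < m), f ⟨k, by omega⟩ < f ⟨k + 1, hk⟩) : StrictMono f := by
  cases m with
  | zero => exact fun a => a.elim0
  | succ m => exact Fin.strictMono_iff_lt_succ.2 fun i => h i (by omega)

theorem Tuple.eq_sort_of_injective_of_monotone {α : Type*} [LinearOrder α] {m : ℕ}
    {f : Fin m → α} (hf : Function.Injective f) {σ : Perm (Fin m)} (h : Monotone (f ∘ σ)) :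
    σ = Tuple.sort f :=
  Tuple.eq_sort_iff.2 ⟨h, fun _ _ hij he => absurd (σ.injective (hf he)) hij.ne⟩

theorem sum_superset_sub_one_pow_card_compl {α R : Type*} [Fintype α] [DecidableEq α]
    [CommRing R] (D : Finset α) (x : R) :
    ∑ S with D ⊆ S, (x - 1) ^ #Sᶜ = x ^ #Dᶜ := by
  calc ∑ S with D ⊆ S, (x - 1) ^ #Sᶜ
      = ∑ T ∈ Dᶜ.powerset, (x - 1) ^ #T * 1 ^ (#Dᶜ - #T) := by
        refine sum_nbij' compl compl ?_ ?_ (fun _ _ => compl_compl _) (fun _ _ => compl_compl _) ?_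
        · intro S hS
          simpa using (mem_filter.1 hS).2
        · intro T hT
          simpa using subset_compl_comm.1 (mem_powerset.1 hT)
        · intro S _
          simp
    _ = x ^ #Dᶜ := by rw [sum_pow_mul_eq_add_pow, sub_add_cancel]

theorem sum_antidiagonalTuple_eq_sum_composition (hn : 0 < n) {M : Type*} [AddCommMonoid M]
    (g : (l : ℕ) → (Fin l → ℕ) → M) :
    ∑ l ∈ Icc 1 n, ∑ s ∈ (Nat.antidiagonalTuple l n).filter (fun s => ∀ i, 1 ≤ s i),
      g l s = ∑ c : Composition n, g c.length c.blocksFun := by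
  rw [sum_sigma']
  have mem {p : Σ l, Fin l → ℕ} (hp : p ∈ (Icc 1 n).sigma
      fun l => (Nat.antidiagonalTuple l n).filter (fun s => ∀ i, 1 ≤ s i)) :
      (∀ {k}, k ∈ List.ofFn p.2 → 0 < k) ∧ (List.ofFn p.2).sum = n := by
    simp only [mem_sigma, mem_filter, Nat.mem_antidiagonalTuple] at hp
    refine ⟨fun hk => ?_, by rw [List.sum_ofFn, hp.2.1]⟩
    obtain ⟨k, rfl⟩ := List.mem_ofFn.1 hk
    exact hp.2.2 k
  refine sum_bij' (fun p hp => ⟨List.ofFn p.2, (mem hp).1, (mem hp).2⟩)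
    (fun c _ => ⟨c.length, c.blocksFun⟩) (fun _ _ => mem_univ _) ?_ ?_ ?_ ?_
  · intro c _
    simp only [mem_sigma, mem_filter, Nat.mem_antidiagonalTuple, mem_Icc]
    exact ⟨⟨c.length_pos_of_pos hn, c.length_le⟩, c.sum_blocksFun, c.one_le_blocksFun⟩
  · intro p _
    exact List.ofFn_inj'.1 (Composition.ofFn_blocksFun _)
  · intro c _
    exact Composition.ext c.ofFn_blocksFun
  · intro p _
    exact congrArg (fun q : Σ l, Fin l → ℕ => g q.1 q.2)
      (List.ofFn_inj'.1 (Composition.ofFn_blocksFun _)).symm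

namespace Composition

variable (c : Composition n)

def boundarySet : Finset (Fin (n - 1)) :=
  compositionAsSetEquiv n c.toCompositionAsSet

theorem mem_boundarySet {j : Fin (n - 1)} :
    j ∈ c.boundarySet ↔ ∃ i, c.sizeUpTo i = j + 1 := by
  simp only [boundarySet, compositionAsSetEquiv, Equiv.coe_fn_mk, Set.mem_toFinset,
    Set.mem_ofPred_eq, toCompositionAsSet_boundaries, boundaries, mem_map, mem_univ, true_and,
    boundary, Fin.ext_iff]
  constructor
  · rintro ⟨i, hi⟩
    exact ⟨i, by change c.sizeUpTo i = 1 + j at hi; omega⟩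
  · rintro ⟨i, hi⟩
    refine ⟨⟨min i c.length, by omega⟩, ?_⟩
    change c.sizeUpTo (min i c.length) = 1 + j
    rcases le_total i c.length with h | h
    · rw [min_eq_left h]; omega
    · rw [min_eq_right h, sizeUpTo_length]; rw [c.sizeUpTo_ofLength_le i h] at hi; omega

theorem strictMonoOn_sizeUpTo : StrictMonoOn c.sizeUpTo (Set.Iic c.length) :=
  strictMonoOn_Iic_of_lt_succ fun _ hi => c.sizeUpTo_strict_mono hi

theorem card_boundarySet : #c.boundarySet = c.length - 1 := by
  have hpos {i} (hi : i ∈ Ioo 0 c.length) : 0 < c.sizeUpTo i ∧ c.sizeUpTo i < n := by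
    obtain ⟨h₀, hl⟩ := mem_Ioo.1 hi
    have h₁ := c.strictMonoOn_sizeUpTo (a := 0) (by simp) (Set.mem_Iic.2 hl.le) h₀
    have h₂ := c.strictMonoOn_sizeUpTo (Set.mem_Iic.2 hl.le) Set.self_mem_Iic hl
    rw [sizeUpTo_zero] at h₁
    rw [sizeUpTo_length] at h₂
    exact ⟨h₁, h₂⟩
  rw [show c.length - 1 = #(Ioo 0 c.length) by simp]
  symm
  refine card_bij (fun i hi => ⟨c.sizeUpTo i - 1, by have := hpos hi; omega⟩) ?_ ?_ ?_
  · intro i hi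
    exact c.mem_boundarySet.2 ⟨i, by have := hpos hi; simp; omega⟩
  · intro a ha b hb hab
    have := hpos ha; have := hpos hb
    refine c.strictMonoOn_sizeUpTo.injOn (Set.mem_Iic.2 (mem_Ioo.1 ha).2.le)
      (Set.mem_Iic.2 (mem_Ioo.1 hb).2.le) ?_
    simp [Fin.ext_iff] at hab
    omega
  · intro j hj
    obtain ⟨i, hi⟩ := c.mem_boundarySet.1 hj
    have h₀ : i ≠ 0 := by rintro rfl; simp at hi
    have hl : i < c.length := by
      by_contra! h
      rw [c.sizeUpTo_ofLength_le i h] at hi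
      omega
    exact ⟨i, mem_Ioo.2 ⟨by omega, hl⟩, by ext; simp; omega⟩

def IsIncreasingOnBlocks (σ : Perm (Fin n)) : Prop :=
  ∀ i, StrictMono (σ ∘ c.embedding i)

theorem sizeUpTo_ne_of_lt_of_lt {i k : ℕ} (h₁ : c.sizeUpTo i < k)
    (h₂ : k < c.sizeUpTo (i + 1)) (i' : ℕ) : c.sizeUpTo i' ≠ k := by
  rintro rfl
  rcases le_or_gt i' i with h | h
  · exact (c.monotone_sizeUpTo h).not_gt h₁
  · exact (c.monotone_sizeUpTo (Nat.succ_le_of_lt h)).not_gt h₂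

theorem isIncreasingOnBlocks_iff_descentSet_subset (σ : Perm (Fin n)) :
    c.IsIncreasingOnBlocks σ ↔ descentSet σ ⊆ c.boundarySet := by
  simp only [subset_iff, mem_descentSet, mem_boundarySet]
  constructor
  · intro hσ j hj
    -- the block containing `j + 1` also contains `j` unless it starts at `j + 1`
    have h₁ := c.sizeUpTo_index_le ⟨j + 1, by omega⟩
    have h₂ := c.lt_sizeUpTo_index_succ ⟨j + 1, by omega⟩
    generalize c.index ⟨j + 1, by omega⟩ = i at h₁ h₂
    simp only [Fin.val_succ] at h₁ h₂
    by_contra hstart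
    have hj' : c.sizeUpTo i ≤ j := by
      have : c.sizeUpTo i ≠ j + 1 := fun h => hstart ⟨i, h⟩
      omega
    obtain ⟨a, ha⟩ := (c.mem_range_embedding_iff (j := ⟨j, by omega⟩) (i := i)).2
      ⟨hj', by simp only [Nat.succ_eq_add_one]; omega⟩
    obtain ⟨b, hb⟩ := (c.mem_range_embedding_iff (j := ⟨j + 1, by omega⟩) (i := i)).2
      ⟨h₁, by simpa using h₂⟩
    have hab : a < b := by
      rw [Fin.lt_def]
      have ha' := congrArg Fin.val ha
      have hb' := congrArg Fin.val hb
      simp only [coe_embedding] at ha' hb'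
      omega
    have := hσ i hab
    simp only [Function.comp_apply, ha, hb] at this
    exact hj.not_gt this
  · intro hσ i
    refine Fin.strictMono_of_lt_add_one fun k hk => ?_
    have hlt : c.sizeUpTo i + k + 1 < c.sizeUpTo (i + 1) := by
      rw [c.sizeUpTo_succ' i]; omega
    have hn : c.sizeUpTo i + k + 1 < n := hlt.trans_le (c.sizeUpTo_le _)
    have hne : σ ⟨c.sizeUpTo i + k, by omega⟩ ≠ σ ⟨c.sizeUpTo i + k + 1, hn⟩ :=
      σ.injective.ne (by simp [Fin.ext_iff])
    rw [Function.comp_apply, Function.comp_apply,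
      show c.embedding i ⟨k, _⟩ = ⟨c.sizeUpTo i + k, by omega⟩ from
        Fin.ext (coe_embedding ..),
      show c.embedding i ⟨k + 1, hk⟩ = ⟨c.sizeUpTo i + k + 1, hn⟩ from
        Fin.ext (coe_embedding ..)]
    refine lt_of_le_of_ne (not_lt.1 fun hdes => ?_) hne
    obtain ⟨i', hi'⟩ := hσ (x := ⟨c.sizeUpTo i + k, by omega⟩) hdes
    exact c.sizeUpTo_ne_of_lt_of_lt (by omega) hlt i' hi'

instance (σ : Perm (Fin n)) : Decidable (c.IsIncreasingOnBlocks σ) :=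
  decidable_of_iff _ (c.isIncreasingOnBlocks_iff_descentSet_subset σ).symm

def blockPermHom : (∀ i, Perm (Fin (c.blocksFun i))) →* Perm (Fin n) :=
  c.blocksFinEquiv.permCongrHom.toMonoidHom.comp (Perm.sigmaCongrRightHom _)

theorem blockPermHom_apply_embedding (π : ∀ i, Perm (Fin (c.blocksFun i))) (i : Fin c.length)
    (j : Fin (c.blocksFun i)) : c.blockPermHom π (c.embedding i j) = c.embedding i (π i j) := by
  rw [show c.embedding i j = c.blocksFinEquiv ⟨i, j⟩ from rfl]
  simp [blockPermHom, Equiv.permCongrHom_coe, Equiv.permCongr_apply]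
  rfl

def sortBlocks (τ : Perm (Fin n)) (i : Fin c.length) : Perm (Fin (c.blocksFun i)) :=
  Tuple.sort (τ ∘ c.embedding i)

theorem mul_blockPermHom_comp_embedding (τ : Perm (Fin n))
    (π : ∀ i, Perm (Fin (c.blocksFun i))) (i : Fin c.length) :
    ⇑(τ * c.blockPermHom π) ∘ c.embedding i = (τ ∘ c.embedding i) ∘ π i := by
  ext j
  simp [blockPermHom_apply_embedding]

theorem isIncreasingOnBlocks_mul_sortBlocks (τ : Perm (Fin n)) :
    c.IsIncreasingOnBlocks (τ * c.blockPermHom (c.sortBlocks τ)) := by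
  intro i
  rw [mul_blockPermHom_comp_embedding]
  exact (Tuple.monotone_sort _).strictMono_of_injective
    ((τ.injective.comp (c.embedding i).injective).comp (Equiv.injective _))

theorem sortBlocks_mul_blockPermHom {σ : Perm (Fin n)} (hσ : c.IsIncreasingOnBlocks σ)
    (π : ∀ i, Perm (Fin (c.blocksFun i))) : c.sortBlocks (σ * c.blockPermHom π) = π⁻¹ := by
  funext i
  refine (Tuple.eq_sort_of_injective_of_monotone
    ((σ * c.blockPermHom π).injective.comp (c.embedding i).injective) ?_).symm
  rw [mul_blockPermHom_comp_embedding, Pi.inv_apply, Function.comp_assoc, ← Perm.coe_mul,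
    mul_inv_cancel, Perm.coe_one, Function.comp_id]
  exact (hσ i).monotone

def permEquivIncreasingOnBlocks :
    Perm (Fin n) ≃ {σ // c.IsIncreasingOnBlocks σ} × ∀ i, Perm (Fin (c.blocksFun i)) where
  toFun τ := (⟨_, c.isIncreasingOnBlocks_mul_sortBlocks τ⟩, (c.sortBlocks τ)⁻¹)
  invFun p := p.1 * c.blockPermHom p.2
  left_inv τ := by simp [mul_assoc]
  right_inv p := by
    obtain ⟨⟨σ, hσ⟩, π⟩ := p
    simp [c.sortBlocks_mul_blockPermHom hσ, mul_assoc]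

theorem card_isIncreasingOnBlocks_mul_prod_factorial :
    #{σ | c.IsIncreasingOnBlocks σ} * ∏ i, (c.blocksFun i).factorial = n.factorial := by
  have := Fintype.card_congr c.permEquivIncreasingOnBlocks
  simpa [Fintype.card_perm, Fintype.card_subtype, Fintype.card_pi] using this.symm

theorem sum_blocksFun_sub_one : ∑ i, (c.blocksFun i - 1) = #c.boundarySetᶜ := by
  rw [sum_tsub_distrib _ fun i _ => c.one_le_blocksFun i, c.sum_blocksFun, card_compl,
    card_boundarySet, Fintype.card_fin, sum_const, card_univ, Fintype.card_fin, smul_eq_mul,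
    mul_one]
  have := c.length_le
  have := c.length_pos_iff
  omega

theorem factorial_smul_prod_eq_card_smul :
    (n.factorial : ℚ) •
        ∏ i, ((X - 1) ^ (c.blocksFun i - 1) * C ((c.blocksFun i).factorial : ℚ)⁻¹) =
      #{σ | c.IsIncreasingOnBlocks σ} • (X - 1 : ℚ[X]) ^ #c.boundarySetᶜ := by
  have hcard : (n.factorial : ℚ) * ∏ i, ((c.blocksFun i).factorial : ℚ)⁻¹ =
      #{σ | c.IsIncreasingOnBlocks σ} := by
    rw [← c.card_isIncreasingOnBlocks_mul_prod_factorial, prod_inv_distrib]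
    push_cast
    exact mul_inv_cancel_right₀ (prod_ne_zero_iff.2 fun i _ => by positivity) _
  rw [prod_mul_distrib, prod_pow_eq_pow_sum, sum_blocksFun_sub_one, ← map_prod, smul_eq_C_mul,
    mul_left_comm, ← map_mul, hcard, map_natCast, nsmul_eq_mul, mul_comm]

theorem sum_isIncreasingOnBlocks_sub_one_pow {R : Type*} [CommRing R] (σ : Perm (Fin n))
    (x : R) :
    ∑ c : Composition n with c.IsIncreasingOnBlocks σ, (x - 1) ^ #c.boundarySetᶜ =
      x ^ #(descentSet σ)ᶜ := by
  simp_rw [isIncreasingOnBlocks_iff_descentSet_subset]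
  rw [← sum_superset_sub_one_pow_card_compl, sum_filter, sum_filter]
  exact Equiv.sum_comp ((compositionEquiv n).trans (compositionAsSetEquiv n))
    fun S => if descentSet σ ⊆ S then (x - 1) ^ #Sᶜ else 0

end Composition

theorem pPoly_eq_sum_composition (hn : 0 < n) :
    pPoly n = ∑ c : Composition n,
      #{σ | c.IsIncreasingOnBlocks σ} • (X - 1 : ℚ[X]) ^ #c.boundarySetᶜ := by
  rw [pPoly, sum_antidiagonalTuple_eq_sum_composition hn
    fun l s => ∏ i, ((X - 1 : ℚ[X]) ^ (s i - 1) * C ((s i).factorial : ℚ)⁻¹), smul_sum]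
  exact sum_congr rfl fun c _ => c.factorial_smul_prod_eq_card_smul

theorem pPoly_eq_sum_X_pow_card_descentSet (hn : 0 < n) :
    pPoly n = ∑ σ : Perm (Fin n), X ^ #(descentSet σ) := by
  calc pPoly n
      = ∑ c : Composition n, ∑ σ with c.IsIncreasingOnBlocks σ,
          (X - 1 : ℚ[X]) ^ #c.boundarySetᶜ := by
        simp only [pPoly_eq_sum_composition hn, sum_const]
    _ = ∑ σ : Perm (Fin n), ∑ c : Composition n with c.IsIncreasingOnBlocks σ,
          (X - 1 : ℚ[X]) ^ #c.boundarySetᶜ := by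
        simp only [sum_filter]; exact sum_comm
    _ = ∑ σ : Perm (Fin n), X ^ #(descentSet σ)ᶜ := by
        simp only [Composition.sum_isIncreasingOnBlocks_sub_one_pow]
    _ = ∑ σ : Perm (Fin n), X ^ #(descentSet σ) := sum_descentSet_compl fun D => X ^ #D

theorem coeff_pPoly (hn : 0 < n) (i : ℕ) :
    (pPoly n).coeff i = #{σ : Perm (Fin n) | #(descentSet σ) = i} := by
  simp [pPoly_eq_sum_X_pow_card_descentSet hn, coeff_X_pow, sum_boole, eq_comm]

theorem natDegree_pPoly (hn : 0 < n) : (pPoly n).natDegree = n - 1 := by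
  refine natDegree_eq_of_le_of_coeff_ne_zero ?_ ?_
  · rw [pPoly_eq_sum_X_pow_card_descentSet hn]
    refine natDegree_sum_le_of_forall_le _ _ fun σ _ => (natDegree_X_pow_le _).trans ?_
    simpa using card_le_univ (descentSet σ)
  · have hrev : #(descentSet (Fin.revPerm : Perm (Fin n))) = n - 1 := by
      rw [← mul_one Fin.revPerm, descentSet_revPerm_mul, descentSet_one, compl_empty, card_univ,
        Fintype.card_fin]
    rw [coeff_pPoly hn]
    exact_mod_cast (card_pos.2 ⟨Fin.revPerm, by simp [hrev]⟩).ne'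

/-- `p_n(q)` has degree `n-1` and its coefficients are the Eulerian numbers:
the coefficient of `q^i` is the number of permutations of `{1,…,n}` with exactly
`i` descents. -/
theorem stmt_3 (n : ℕ) (hn : 1 ≤ n) :
    (pPoly n).natDegree = n - 1 ∧
    ∀ i : ℕ, (pPoly n).coeff i =
      (Nat.card {σ : Equiv.Perm (Fin n) // descents n σ = i} : ℚ) := by
  refine ⟨natDegree_pPoly hn, fun i => ?_⟩
  rw [coeff_pPoly hn, Nat.card_eq_fintype_card, Fintype.card_subtype]
  simp only [descents_eq_card_descentSet]
end

section
/- The formal power series identity 1 + ∑_{n≥1} (p_n(q)/n!) y^n = (q−1)/(q − e^{(q−1)y}) holds in Q[q][[y]], where p_n(q) = n! · ∑_{l=1}^{n} ∑_{s_1+...+s_l=n, s_i≥1} ∏_i (q−1)^{s_i−1}/s_i!. -/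
/-!
Write `G = (e^{(q-1)y} - 1)/(q - 1) = ∑_{k ≥ 1} (q-1)^{k-1} y^k / k!`, so that
`q - e^{(q-1)y} = (q - 1)(1 - G)`. Since `G` has no constant term, `1 - G` is inverted by the
geometric series `∑_l G^l`, and the coefficient of `y^n` in `G^l` is the sum over compositions
`s_1 + ⋯ + s_l = n` with all `s_i ≥ 1` of `∏_i (q-1)^{s_i-1}/s_i!`, i.e. exactly `p_n(q)/n!`.
-/

open Polynomial

namespace PowerSeries

open Finset

section CommSemiring

variable {R : Type*} [CommSemiring R]

theorem coeff_pow_eq_sum_antidiagonalTuple (φ : R⟦X⟧) (l n : ℕ) :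
    coeff n (φ ^ l) = ∑ s ∈ Nat.antidiagonalTuple l n, ∏ i, coeff (s i) φ := by
  rw [← Fin.prod_const, coeff_prod, finsuppAntidiag, sum_map,
    ← piAntidiag_univ_fin_eq_antidiagonalTuple, ← sum_attach (piAntidiag univ n)]
  rfl

variable {φ : R⟦X⟧}

theorem coeff_pow_eq_sum_positive_antidiagonalTuple (hφ : constantCoeff φ = 0) (l n : ℕ) :
    coeff n (φ ^ l) =
      ∑ s ∈ (Nat.antidiagonalTuple l n).filter (fun s => ∀ i, 1 ≤ s i), ∏ i, coeff (s i) φ := by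
  rw [coeff_pow_eq_sum_antidiagonalTuple, sum_filter_of_ne]
  intro s _ hs i
  by_contra! hi
  exact hs (prod_eq_zero (mem_univ i) (by rwa [Nat.lt_one_iff.mp hi, coeff_zero_eq_constantCoeff]))

theorem coeff_pow_eq_zero_of_lt (hφ : constantCoeff φ = 0) {l n : ℕ} (h : n < l) :
    coeff n (φ ^ l) = 0 := by
  obtain ⟨ψ, rfl⟩ := X_dvd_iff.mpr hφ
  rw [mul_pow, coeff_X_pow_mul', if_neg (not_le.mpr h)]

end CommSemiring

theorem one_sub_mul_mk_sum_coeff_pow {R : Type*} [CommRing R] {φ : R⟦X⟧}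
    (hφ : constantCoeff φ = 0) :
    (1 - φ) * mk (fun n => ∑ l ∈ range (n + 1), coeff n (φ ^ l)) = 1 := by
  ext n
  have htrunc : ∀ p ∈ antidiagonal n,
      coeff p.2 (mk fun n => ∑ l ∈ range (n + 1), coeff n (φ ^ l)) =
        coeff p.2 (∑ l ∈ range (n + 1), φ ^ l) := by
    intro p hp
    rw [coeff_mk, map_sum]
    refine sum_subset (range_subset_range.mpr (by have := mem_antidiagonal.mp hp; omega)) ?_
    intro l _ hl
    exact coeff_pow_eq_zero_of_lt hφ (by simpa using hl)
  rw [coeff_mul, sum_congr rfl fun p hp => congrArg _ (htrunc p hp), ← coeff_mul,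
    ← neg_sub φ, neg_mul, mul_geom_sum, neg_sub, map_sub,
    coeff_pow_eq_zero_of_lt hφ n.lt_succ_self, sub_zero]

end PowerSeries

noncomputable def expQuot : PowerSeries ℚ[X] :=
  PowerSeries.mk fun k => if k = 0 then 0 else (X - 1) ^ (k - 1) * C ((k.factorial : ℚ)⁻¹)

theorem constantCoeff_expQuot : PowerSeries.constantCoeff expQuot = 0 := by
  simp [expQuot, ← PowerSeries.coeff_zero_eq_constantCoeff_apply]

theorem C_X_sub_exp_eq_C_mul_one_sub_expQuot :
    PowerSeries.C X - PowerSeries.mk (fun k => (X - 1) ^ k * C ((k.factorial : ℚ)⁻¹)) =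
      PowerSeries.C (X - 1) * (1 - expQuot) := by
  ext (_ | k) : 1
  · simp [expQuot]
  · rw [map_sub, PowerSeries.coeff_C_mul, map_sub]
    simp only [expQuot, PowerSeries.coeff_succ_C, PowerSeries.coeff_mk, PowerSeries.coeff_one,
      Nat.add_eq_zero_iff, one_ne_zero, and_false, ↓reduceIte, add_tsub_cancel_right, zero_sub]
    ring

theorem coeff_expQuot_pow (l n : ℕ) :
    PowerSeries.coeff n (expQuot ^ l) =
      ∑ s ∈ (Finset.Nat.antidiagonalTuple l n).filter (fun s => ∀ i, 1 ≤ s i),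
        ∏ i, ((X - 1) ^ (s i - 1) * C (((s i).factorial : ℚ)⁻¹)) := by
  rw [PowerSeries.coeff_pow_eq_sum_positive_antidiagonalTuple constantCoeff_expQuot]
  refine Finset.sum_congr rfl fun s hs => Finset.prod_congr rfl fun i _ => ?_
  have hi : s i ≠ 0 := Nat.one_le_iff_ne_zero.mp ((Finset.mem_filter.mp hs).2 i)
  simp [expQuot, hi]

theorem inv_factorial_smul_pPoly {n : ℕ} (hn : n ≠ 0) :
    ((n.factorial : ℚ))⁻¹ • pPoly n =
      ∑ l ∈ Finset.range (n + 1), PowerSeries.coeff n (expQuot ^ l) := by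
  rw [pPoly, inv_smul_smul₀ (by positivity), Finset.range_eq_Ico,
    Finset.sum_eq_sum_Ico_succ_bot (by omega), pow_zero, PowerSeries.coeff_one, if_neg hn, zero_add]
  exact Finset.sum_congr rfl fun l _ => (coeff_expQuot_pow l n).symm

theorem mk_pPoly_eq_mk_sum_coeff_expQuot_pow :
    PowerSeries.mk (fun n => if n = 0 then (1 : ℚ[X]) else ((n.factorial : ℚ))⁻¹ • pPoly n) =
      PowerSeries.mk (fun n => ∑ l ∈ Finset.range (n + 1), PowerSeries.coeff n (expQuot ^ l)) := by
  ext (_ | n) : 1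
  · simp
  · simp [inv_factorial_smul_pPoly]

/-- The generating series identity
`(q − e^{(q−1)y}) · (1 + ∑_{n≥1} (p_n(q)/n!) y^n) = q − 1` in `ℚ[q][[y]]`. -/
theorem stmt_4 :
    (PowerSeries.C (R := Polynomial ℚ) X -
        PowerSeries.mk (fun kk => (X - 1) ^ kk * C (((kk.factorial : ℚ))⁻¹))) *
      PowerSeries.mk (fun n =>
        if n = 0 then (1 : Polynomial ℚ) else ((n.factorial : ℚ))⁻¹ • pPoly n)
      = PowerSeries.C (R := Polynomial ℚ) (X - 1) := by
  rw [C_X_sub_exp_eq_C_mul_one_sub_expQuot, mk_pPoly_eq_mk_sum_coeff_expQuot_pow, mul_assoc,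
    PowerSeries.one_sub_mul_mk_sum_coeff_pow constantCoeff_expQuot, mul_one]
end

section
/- Let k be a commutative ring, B a finite set, and R_B the polynomial ring over k with one indeterminate l_σ for every 2-partition σ of B. Let I_B be the ideal generated by the elements r^(1)_{ij} = ∑_{σ: iσj} l_σ − ∑_{σ: jσi} l_σ (over all i ≠ j in B) and the products l_σ l_τ whenever there exist i,j with iσj and jτi. For an ordered partition τ of B of length N+1, let m(τ) be the product of the l_{σ^(a)} over its associated good family of 2-partitions, with m of the trivial 1-partition equal to 1. Then the images of the good monomials m(τ), over all ordered partitions τ of B, span R_B/I_B as a k-module. -/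
/-- A 2-partition of `α`, encoded by its first component: a nonempty proper subset. -/
abbrev TwoPart (α : Type) [Fintype α] [DecidableEq α] :=
  {s : Finset α // s.Nonempty ∧ s ≠ Finset.univ}

/-- The ideal `I_B`, generated by the linear relations `r¹_{ij}` and the quadratic
relations `l_σ l_τ` for incompatible pairs `σ, τ`. -/
noncomputable def IB (α : Type) [Fintype α] [DecidableEq α]
    (k : Type) [CommRing k] : Ideal (MvPolynomial (TwoPart α) k) :=
  Ideal.span
    ({x | ∃ i j : α, i ≠ j ∧ x =
        (∑ σ : TwoPart α, if i ∈ σ.val ∧ j ∉ σ.val then MvPolynomial.X σ else 0) -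
        (∑ σ : TwoPart α, if j ∈ σ.val ∧ i ∉ σ.val then MvPolynomial.X σ else 0)} ∪
     {x | ∃ σ τ : TwoPart α,
        (∃ i j : α, i ∈ σ.val ∧ j ∉ σ.val ∧ j ∈ τ.val ∧ i ∉ τ.val) ∧
        x = MvPolynomial.X σ * MvPolynomial.X τ})

/-!
Monomials in the `l_σ` span `R_B`. A monomial containing two incomparable 2-partitions lies in
`I_B`, and a squarefree monomial whose 2-partitions form a chain `σ_1 ⊂ ⋯ ⊂ σ_N` is the good
monomial of the ordered partition with blocks `σ_{a+1} \ σ_a`. A repeated factor `l_V` of a chain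
monomial `l_V M` is removed with `r¹_{ij}`, where `i ∈ V` lies in no smaller member of the chain and
`j ∉ V` lies in every larger one: every `σ` with `jσi` is incomparable with `V`, so modulo `I_B`,
`l_V M = -∑ l_σ M` over the `σ ≠ V` with `iσj`, and each such `σ` is either incomparable with a
factor of `M` or new to the monomial. This lowers the number of repeated factors.
-/

open MvPolynomial Finset

theorem MvPolynomial.span_range_prod_X_eq_top {σ R : Type*} [CommSemiring R] :
    Submodule.span R (Set.range fun m : Multiset σ => ((m.map X).prod : MvPolynomial σ R)) = ⊤ := by
  classical
  refine eq_top_iff.2 ((basisMonomials σ R).span_eq.ge.trans (Submodule.span_mono ?_))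
  rintro _ ⟨d, rfl⟩
  refine ⟨Finsupp.toMultiset d, ?_⟩
  simp only [coe_basisMonomials]
  rw [Finsupp.toMultiset_map, Finsupp.prod_toMultiset,
    Finsupp.prod_mapDomain_index (fun _ => pow_zero _) (fun _ _ _ => pow_add _ _ _)]
  simp [monomial_eq]

theorem Multiset.exists_mem_erase_self_of_not_nodup {β : Type*} [DecidableEq β]
    {m : Multiset β} (h : ¬m.Nodup) : ∃ a, a ∈ m.erase a := by
  obtain ⟨a, t, rfl⟩ : ∃ a t, m = a ::ₘ a ::ₘ t := by
    simpa [Multiset.nodup_iff_ne_cons_cons] using h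
  exact ⟨a, by simp⟩

theorem Multiset.card_sub_card_toFinset_cons_erase_lt {β : Type*} [DecidableEq β]
    {m : Multiset β} {a b : β} (ha : a ∈ m.erase a) (hb : b ∉ m) :
    card (b ::ₘ m.erase a) - #(b ::ₘ m.erase a).toFinset < card m - #m.toFinset := by
  have hm : a ∈ m := Multiset.mem_of_mem_erase ha
  have hsupp : (m.erase a).toFinset = m.toFinset := by
    ext x
    rcases eq_or_ne x a with rfl | hx
    · simp [ha, hm]
    · simp [Multiset.mem_erase_of_ne hx]
  have hle := Multiset.toFinset_card_le (m.erase a)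
  have hcard := Multiset.card_erase_add_one hm
  rw [hsupp] at hle
  rw [Multiset.card_cons, hcard, Multiset.toFinset_cons, hsupp,
    card_insert_of_notMem (by simpa using hb)]
  omega

theorem IsChain.exists_equiv_fin_strictMono {β : Type*} [PartialOrder β] {s : Finset β}
    (hs : IsChain (· ≤ ·) (s : Set β)) : ∃ e : Fin #s ≃ s, StrictMono fun a => (e a : β) := by
  classical
  let := hs.linearOrder
  let e := Fintype.orderIsoFinOfCardEq (s : Set β) (k := #s) (by simp)
  exact ⟨e.toEquiv, fun _ _ hab => e.strictMono hab⟩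

section FinsetChain

variable {α : Type*} [Fintype α] [DecidableEq α] {s : Set (Finset α)}

theorem IsChain.exists_mem_forall_lt_notMem (hs : IsChain (· ≤ ·) s) {V : Finset α}
    (hV : V.Nonempty) : ∃ i ∈ V, ∀ ρ ∈ s, ρ < V → i ∉ ρ := by
  by_cases h : ∃ ρ ∈ s, ρ < V
  · obtain ⟨w, hw⟩ := (Set.toFinite {ρ ∈ s | ρ < V}).exists_maximal h
    obtain ⟨i, hiV, hiw⟩ := exists_of_ssubset hw.prop.2
    exact ⟨i, hiV, fun ρ hρ hρV hiρ =>
      hiw (hs.le_of_not_gt hw.prop.1 hρ (hw.not_gt ⟨hρ, hρV⟩) hiρ)⟩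
  · push Not at h
    obtain ⟨i, hi⟩ := hV
    exact ⟨i, hi, fun ρ hρ hρV => absurd hρV (h ρ hρ)⟩

theorem IsChain.exists_notMem_forall_gt_mem (hs : IsChain (· ≤ ·) s) {V : Finset α}
    (hV : V ≠ univ) : ∃ j ∉ V, ∀ ρ ∈ s, V < ρ → j ∈ ρ := by
  obtain ⟨j, hj, hjρ⟩ := ((compl_antitone _).isChain_image hs).exists_mem_forall_lt_notMem
    (nonempty_iff_ne_empty.2 (by rwa [Ne, compl_eq_empty_iff]) : Vᶜ.Nonempty)
  exact ⟨j, mem_compl.1 hj, fun ρ hρ hVρ => by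
    simpa using hjρ ρᶜ ⟨ρ, hρ, rfl⟩ (compl_lt_compl_iff_lt.2 hVρ)⟩

end FinsetChain

theorem disjointed_nonempty_of_strictMono {α : Type*} [DecidableEq α] {n : ℕ}
    {F : Fin (n + 1) → Finset α} (hF : StrictMono F) (h0 : (F 0).Nonempty) (b : Fin (n + 1)) :
    (disjointed F b).Nonempty := by
  induction b using Fin.cases with
  | zero => simpa [← bot_eq_zero, disjointed_bot] using h0
  | succ c =>
    rw [← Fin.orderSucc_castSucc, hF.monotone.disjointed_succ (Fin.castSucc_lt_last c).not_isMax,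
      Fin.orderSucc_castSucc]
    exact sdiff_nonempty.2 (hF Fin.castSucc_lt_succ).not_subset

theorem exists_orderedPartition_of_strictMono {α : Type} [Fintype α] [DecidableEq α] [Nonempty α]
    {N : ℕ} {g : Fin N → TwoPart α} (hg : StrictMono g) :
    ∃ τ : Fin (N + 1) → Finset α,
      (∀ i, (τ i).Nonempty) ∧ (∀ i j, i ≠ j → Disjoint (τ i) (τ j)) ∧
      univ.biUnion τ = univ ∧
      ∀ a : Fin N, (g a).val = (univ.filter fun b : Fin (N + 1) => b.val ≤ a.val).biUnion τ := by
  let F : Fin (N + 1) → Finset α := fun b => if h : b.val < N then (g ⟨b, h⟩).val else univ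
  have hF : StrictMono F := by
    intro b c hbc
    have hb : b.val < N := by omega
    simp only [F, dif_pos hb]
    split_ifs with hc
    · exact hg (Fin.mk_lt_mk.2 hbc)
    · exact ssubset_univ_iff.2 (g _).prop.2
  have hsup : ∀ b, (Iic b).biUnion (disjointed F) = F b := fun b => by
    rw [← sup_eq_biUnion, ← sup'_eq_sup nonempty_Iic, ← partialSups_apply,
      partialSups_disjointed, hF.monotone.partialSups_eq]
  refine ⟨disjointed F, disjointed_nonempty_of_strictMono hF ?_, fun i j hij =>
    disjoint_disjointed F hij, ?_, fun a => ?_⟩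
  · unfold F
    split_ifs
    exacts [(g _).prop.1, univ_nonempty]
  · simpa [F, Iic_top] using hsup ⊤
  · convert (hsup a.castSucc).symm using 2
    · simp [F]
    · ext b; simp [Fin.le_def]

section

variable {α : Type} [Fintype α] [DecidableEq α] {k : Type} [CommRing k]

theorem IB.X_mul_X_mem {σ τ : TwoPart α} (hστ : ¬σ ≤ τ) (hτσ : ¬τ ≤ σ) :
    (X σ * X τ : MvPolynomial (TwoPart α) k) ∈ IB α k := by
  obtain ⟨i, hiσ, hiτ⟩ := not_subset.1 hστ
  obtain ⟨j, hjτ, hjσ⟩ := not_subset.1 hτσ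
  exact Ideal.subset_span (Or.inr ⟨σ, τ, ⟨i, j, hiσ, hjσ, hjτ, hiτ⟩, rfl⟩)

theorem IB.sum_X_sub_sum_X_mem {i j : α} (hij : i ≠ j) :
    (∑ σ : TwoPart α with i ∈ σ.val ∧ j ∉ σ.val, X σ) -
      (∑ σ : TwoPart α with j ∈ σ.val ∧ i ∉ σ.val, X σ : MvPolynomial (TwoPart α) k) ∈ IB α k := by
  simp only [sum_filter]
  exact Ideal.subset_span (Or.inl ⟨i, j, hij, rfl⟩)

theorem IB.prod_X_mem_of_not_isChain {m : Multiset (TwoPart α)}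
    (hm : ¬IsChain (· ≤ ·) {σ | σ ∈ m}) : (m.map X).prod ∈ IB α k := by
  rw [IsChain, Set.Pairwise] at hm
  push Not at hm
  obtain ⟨σ, hσ, τ, hτ, hne, hστ⟩ := hm
  have hle : ({σ, τ} : Multiset (TwoPart α)) ≤ m := by
    rw [Multiset.le_iff_subset (by simpa using hne), Multiset.insert_eq_cons, Multiset.cons_subset,
      Multiset.singleton_subset]
    exact ⟨hσ, hτ⟩
  refine Ideal.mem_of_dvd _ ?_ (X_mul_X_mem hστ.1 hστ.2)
  simpa using Multiset.prod_dvd_prod_of_le (Multiset.map_le_map (f := X) hle)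

theorem IB.sum_prod_X_cons_mem {m : Multiset (TwoPart α)} {V : TwoPart α} {i j : α}
    (hV : V ∈ m) (hi : i ∈ V.val) (hj : j ∉ V.val) :
    ∑ σ : TwoPart α with i ∈ σ.val ∧ j ∉ σ.val, ((σ ::ₘ m).map X).prod ∈ IB α k := by
  have hij : i ≠ j := fun h => hj (h ▸ hi)
  set M : MvPolynomial (TwoPart α) k := (m.map X).prod
  set P : α → α → MvPolynomial (TwoPart α) k :=
    fun i j => ∑ σ : TwoPart α with i ∈ σ.val ∧ j ∉ σ.val, X σ
  have hMP : M * P j i ∈ IB α k := by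
    rw [mul_sum]
    refine Ideal.sum_mem _ fun σ hσ => ?_
    obtain ⟨hjσ, hiσ⟩ := (mem_filter.1 hσ).2
    rw [mul_comm, ← Multiset.prod_cons, ← Multiset.map_cons]
    refine prod_X_mem_of_not_isChain fun hc => ?_
    rcases hc.total (Multiset.mem_cons_self σ m) (Multiset.mem_cons_of_mem hV) with h | h
    exacts [hj (h hjσ), hiσ (h hi)]
  have hsum : ∑ σ : TwoPart α with i ∈ σ.val ∧ j ∉ σ.val, ((σ ::ₘ m).map X).prod =
      M * (P i j - P j i) + M * P j i := by
    rw [mul_sub, sub_add_cancel, mul_sum]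
    exact sum_congr rfl fun σ _ => by rw [Multiset.map_cons, Multiset.prod_cons, mul_comm]
  rw [hsum]
  exact add_mem (Ideal.mul_mem_left _ _ (sum_X_sub_sum_X_mem hij)) hMP

theorem mk_prod_X_mem_span_exchange {m : Multiset (TwoPart α)} (hm : IsChain (· ≤ ·) {σ | σ ∈ m})
    {V : TwoPart α} (hV : V ∈ m.erase V) :
    Ideal.Quotient.mk (IB α k) (m.map X).prod ∈ Submodule.span k
      ((fun σ => Ideal.Quotient.mk (IB α k) ((σ ::ₘ m.erase V).map X).prod) '' {σ | σ ∉ m}) := by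
  have hVm : V ∈ m := Multiset.mem_of_mem_erase hV
  have hs : IsChain (· ≤ ·) (Subtype.val '' {σ | σ ∈ m}) := (Subtype.mono_coe _).isChain_image hm
  obtain ⟨i, hiV, hi⟩ := hs.exists_mem_forall_lt_notMem V.prop.1
  obtain ⟨j, hjV, hj⟩ := hs.exists_notMem_forall_gt_mem V.prop.2
  have hrel := Ideal.Quotient.eq_zero_iff_mem.2 (IB.sum_prod_X_cons_mem (k := k) hV hiV hjV)
  rw [map_sum, ← add_sum_erase _ _ (mem_filter.2 ⟨mem_univ V, hiV, hjV⟩),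
    Multiset.cons_erase hVm, add_eq_zero_iff_eq_neg] at hrel
  rw [hrel]
  refine neg_mem (sum_mem fun σ hσ => Submodule.subset_span ⟨σ, fun hσm => ?_, rfl⟩)
  obtain ⟨hσV, hσ⟩ := mem_erase.1 hσ
  obtain ⟨hiσ, hjσ⟩ := (mem_filter.1 hσ).2
  rcases hm.total hσm hVm with h | h
  · exact hi σ ⟨σ, hσm, rfl⟩ (Subtype.coe_lt_coe.2 (h.lt_of_ne hσV)) hiσ
  · exact hjσ (hj σ ⟨σ, hσm, rfl⟩ (Subtype.coe_lt_coe.2 (h.lt_of_ne hσV.symm)))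

end

def goodMonomials (α : Type) [Fintype α] [DecidableEq α] (k : Type) [CommRing k] :
    Set (MvPolynomial (TwoPart α) k ⧸ IB α k) :=
  {x | ∃ (N : ℕ) (τ : Fin (N + 1) → Finset α),
    (∀ i, (τ i).Nonempty) ∧ (∀ i j, i ≠ j → Disjoint (τ i) (τ j)) ∧
    Finset.univ.biUnion τ = Finset.univ ∧
    ∃ g : Fin N → TwoPart α,
      (∀ a : Fin N, (g a).val =
        (Finset.univ.filter (fun b : Fin (N + 1) => b.val ≤ a.val)).biUnion τ) ∧
      x = Ideal.Quotient.mk (IB α k) (∏ a : Fin N, MvPolynomial.X (g a))}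

section

variable {α : Type} [Fintype α] [DecidableEq α] [Nonempty α] {k : Type} [CommRing k]

theorem mk_prod_X_mem_goodMonomials {m : Multiset (TwoPart α)}
    (hc : IsChain (· ≤ ·) {σ | σ ∈ m}) (hnd : m.Nodup) :
    Ideal.Quotient.mk (IB α k) (m.map X).prod ∈ goodMonomials α k := by
  obtain ⟨e, he⟩ := IsChain.exists_equiv_fin_strictMono (s := m.toFinset) (by convert hc; ext; simp)
  obtain ⟨τ, hτ, hdisj, hcover, hflag⟩ := exists_orderedPartition_of_strictMono he
  refine ⟨_, τ, hτ, hdisj, hcover, _, hflag, ?_⟩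
  rw [e.prod_comp (fun σ => X σ.val), prod_coe_sort, prod_eq_multiset_prod, Multiset.toFinset_val,
    hnd.dedup]

theorem mk_prod_X_mem_span_goodMonomials (m : Multiset (TwoPart α)) :
    Ideal.Quotient.mk (IB α k) (m.map X).prod ∈ Submodule.span k (goodMonomials α k) := by
  by_cases hc : IsChain (· ≤ ·) {σ | σ ∈ m}
  swap
  · rw [Ideal.Quotient.eq_zero_iff_mem.2 (IB.prod_X_mem_of_not_isChain hc)]
    exact zero_mem _
  by_cases hnd : m.Nodup
  · exact Submodule.subset_span (mk_prod_X_mem_goodMonomials hc hnd)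
  obtain ⟨V, hV⟩ := Multiset.exists_mem_erase_self_of_not_nodup hnd
  refine Submodule.span_le.2 ?_ (mk_prod_X_mem_span_exchange hc hV)
  rintro _ ⟨σ, hσ, rfl⟩
  exact mk_prod_X_mem_span_goodMonomials (σ ::ₘ m.erase V)
termination_by Multiset.card m - #m.toFinset
decreasing_by exact Multiset.card_sub_card_toFinset_cons_erase_lt hV hσ

end

/-- The images of the good monomials `m(τ)`, over all ordered partitions `τ` of `B`,
span `R_B/I_B` as a `k`-module. Here `m(τ)` is the product of the variables attached
to the good family of 2-partitions `σ^(a)_1 = τ_1 ∪ … ∪ τ_a` of an `(N+1)`-partition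
`τ`, and the trivial 1-partition gives `m = 1` (empty product). -/
theorem stmt_12 {α : Type} [Fintype α] [DecidableEq α] [Nonempty α]
    {k : Type} [CommRing k] :
    Submodule.span k
      {x : MvPolynomial (TwoPart α) k ⧸ IB α k |
        ∃ (N : ℕ) (τ : Fin (N + 1) → Finset α),
          (∀ i, (τ i).Nonempty) ∧ (∀ i j, i ≠ j → Disjoint (τ i) (τ j)) ∧
          Finset.univ.biUnion τ = Finset.univ ∧
          ∃ g : Fin N → TwoPart α,
            (∀ a : Fin N, (g a).val =
              (Finset.univ.filter (fun b : Fin (N + 1) => b.val ≤ a.val)).biUnion τ) ∧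
            x = Ideal.Quotient.mk (IB α k) (∏ a : Fin N, MvPolynomial.X (g a))} = ⊤ := by
  refine eq_top_iff.2 fun x _ => ?_
  obtain ⟨p, rfl⟩ := Ideal.Quotient.mk_surjective x
  have hp : p ∈ Submodule.span k (Set.range fun m : Multiset (TwoPart α) => (m.map X).prod) := by
    rw [span_range_prod_X_eq_top]
    trivial
  have hle : Submodule.span k (Set.range fun m : Multiset (TwoPart α) => (m.map X).prod) ≤
      (Submodule.span k (goodMonomials α k)).comap (Ideal.Quotient.mkₐ k (IB α k)).toLinearMap :=
    Submodule.span_le.2 (Set.range_subset_iff.2 mk_prod_X_mem_span_goodMonomials)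
  exact hle hp
end

section
/- Let F be a vector space over a field k of characteristic zero and suppose given, for each n ≥ 1 and each function (a_1,...,a_n) with values in an index set I, elements ⟨Δ_{a_1}...Δ_{a_n}⟩ ∈ End F that are symmetric under permutations of the indices. Define for each ordered partition τ = (τ_1,...,τ_N) of {1,...,n} the element τ⟨Δ_{a_1}...Δ_{a_n}⟩ := ∏_{r=1}^{N} ⟨∏_{k ∈ τ_r} Δ_{a_k}⟩ (product in End F in the order of the parts). If the top correlators satisfy, for every n, indices (a_1,...,a_n), and i ≠ j ∈ {1,...,n}: ∑_{σ: iσj} ⟨∏_{k∈σ_1} Δ_{a_k}⟩·⟨∏_{k∈σ_2} Δ_{a_k}⟩ = ∑_{σ: jσi} ⟨∏_{k∈σ_1} Δ_{a_k}⟩·⟨∏_{k∈σ_2} Δ_{a_k}⟩ (σ running over 2-partitions of {1,...,n}), then for every ordered partition τ, every index a with |τ_a| ≥ 2, and every i ≠ j ∈ τ_a: ∑_{α: iαj} τ(α)⟨Δ_{a_1}...Δ_{a_n}⟩ = ∑_{α: jαi} τ(α)⟨Δ_{a_1}...Δ_{a_n}⟩, where α runs over 2-partitions of τ_a and τ(α)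 is the refinement of τ replacing τ_a by α. -/
/-!
Only the `r`-th and `(r+1)`-st factors of `τ(α)⟨Δ_{a_1}…Δ_{a_n}⟩` depend on `α`, so both sides
are `L * (∑_α ⟨∏_{α_1}Δ⟩⟨∏_{α_2}Δ⟩) * R` with common outer factors `L`, `R`. The inner sums are
the quadratic relation for the subfamily `(a_k)_{k ∈ τ_r}`: relabelling `τ_r` increasingly by
`Fin |τ_r|` identifies its 2-partitions with those of `Fin |τ_r|`, and `DS` of an image with `DS`
of the relabelled family.
-/

/-- The top correlator attached to a subset `s ⊆ Fin n` of index positions: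
`⟨∏_{k∈s} Δ_{a_k}⟩`, well defined thanks to the symmetry of `D`. -/
noncomputable def DS {k F I : Type} [Field k] [AddCommGroup F] [Module k F]
    (D : ∀ n, (Fin n → I) → Module.End k F)
    (n : ℕ) (a : Fin n → I) (s : Finset (Fin n)) : Module.End k F :=
  D s.card (fun t => a (s.orderIsoOfFin rfl t).val)

/-- The refinement `τ(α)` of an ordered partition `τ`, replacing the part with index `r`
by the two sets `s1, s2`. -/
def refine {γ : Type} {N : ℕ} (τ : Fin (N + 1) → Finset γ) (r : Fin (N + 1))
    (s1 s2 : Finset γ) : Fin (N + 2) → Finset γ := fun b =>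
  if hb : b.val < r.val then τ ⟨b.val, by have := r.isLt; omega⟩
  else if b.val = r.val then s1
  else if b.val = r.val + 1 then s2
  else τ ⟨b.val - 1, by have := b.isLt; omega⟩

namespace List

theorem take_ofFn_congr {α : Type*} {m : ℕ} {f g : Fin m → α} {p : ℕ}
    (h : ∀ c : Fin m, c.val < p → f c = g c) : (ofFn f).take p = (ofFn g).take p :=
  ext_getElem (by simp) fun t _ _ => by
    simp only [getElem_take, List.getElem_ofFn]
    exact h _ (by simp_all)

theorem drop_ofFn_congr {α : Type*} {m : ℕ} {f g : Fin m → α} {p : ℕ}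
    (h : ∀ c : Fin m, p ≤ c.val → f c = g c) : (ofFn f).drop p = (ofFn g).drop p :=
  ext_getElem (by simp) fun t _ _ => by
    simp only [getElem_drop, List.getElem_ofFn]
    exact h _ (Nat.le_add_right p t)

theorem prod_ofFn_eq_take_mul_mul_drop {M : Type*} [Monoid M] {m : ℕ} (f : Fin m → M) (p : ℕ)
    (hp : p + 1 < m) :
    (ofFn f).prod =
      ((ofFn f).take p).prod * (f ⟨p, by omega⟩ * f ⟨p + 1, hp⟩) *
        ((ofFn f).drop (p + 2)).prod := by
  conv_lhs => rw [← take_append_drop p (ofFn f),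
    drop_eq_getElem_cons (by simp; omega), drop_eq_getElem_cons (by simp; omega)]
  simp [mul_assoc]

end List

theorem exists_prod_ofFn_refine_eq {γ : Type} {M : Type*} [Monoid M] {N : ℕ}
    (f : Finset γ → M) (τ : Fin (N + 1) → Finset γ) (r : Fin (N + 1)) :
    ∃ L R : M, ∀ s1 s2 : Finset γ,
      (List.ofFn fun c => f (refine τ r s1 s2 c)).prod = L * (f s1 * f s2) * R := by
  set g : Fin (N + 2) → M := fun c => f (refine τ r ∅ ∅ c)
  refine ⟨((List.ofFn g).take r).prod, ((List.ofFn g).drop (r + 2)).prod, fun s1 s2 => ?_⟩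
  rw [List.prod_ofFn_eq_take_mul_mul_drop _ r (by omega),
    List.take_ofFn_congr (g := g) fun c hc => by simp [g, refine, hc],
    List.drop_ofFn_congr (g := g) fun c hc => by
      simp [g, refine, show ¬ c.val < r by omega, show c.val ≠ r by omega,
        show c.val ≠ r + 1 by omega]]
  simp [refine]

theorem Finset.sum_ite_subset_and {α M : Type*} [Fintype α] [DecidableEq α] [AddCommMonoid M]
    (T : Finset α) (p : Finset α → Prop) [DecidablePred p] (g : Finset α → M) :
    ∑ s, (if s ⊆ T ∧ p s then g s else 0) = ∑ s ∈ T.powerset, if p s then g s else 0 := by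
  rw [← sum_filter, ← sum_filter]
  congr 1
  ext s
  simp

theorem Finset.sum_powerset_eq_sum_image_orderEmbOfFin {α M : Type*} [LinearOrder α]
    [AddCommMonoid M] (T : Finset α) (g : Finset α → M) :
    ∑ s ∈ T.powerset, g s = ∑ s : Finset (Fin T.card), g (s.image (T.orderEmbOfFin rfl)) := by
  conv_lhs => rw [← T.image_orderEmbOfFin_univ rfl, powerset_image, powerset_univ,
    sum_image fun _ _ _ _ h => image_injective (T.orderEmbOfFin rfl).injective h]

section Correlators

variable {k F I : Type} [Field k] [AddCommGroup F] [Module k F]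
  (D : ∀ n, (Fin n → I) → Module.End k F)

theorem DS_image {n m : ℕ} (a : Fin n → I) (e : Fin m ↪o Fin n) (s : Finset (Fin m)) :
    DS D n a (s.image e) = DS D m (a ∘ e) s := by
  have hcard : (s.image e).card = s.card := Finset.card_image_of_injective _ e.injective
  have horder :
      (s.image e).orderEmbOfFin rfl = fun t => e (s.orderEmbOfFin rfl (Fin.cast hcard t)) :=
    (Finset.orderEmbOfFin_unique rfl
      (fun _ => Finset.mem_image_of_mem _ (s.orderEmbOfFin_mem _ _))
      (e.strictMono.comp ((s.orderEmbOfFin rfl).strictMono.comp (Fin.cast_strictMono hcard)))).symm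
  unfold DS
  simp only [Finset.coe_orderIsoOfFin_apply, horder]
  clear horder
  generalize (s.image e).card = c at hcard ⊢
  subst hcard
  rfl

theorem sum_subset_DS_mul_DS_sdiff_eq {n : ℕ} (a : Fin n → I) (T : Finset (Fin n))
    (x y : Fin T.card) :
    (∑ s : Finset (Fin n),
        if s ⊆ T ∧ T.orderEmbOfFin rfl x ∈ s ∧ T.orderEmbOfFin rfl y ∈ T \ s then
          DS D n a s * DS D n a (T \ s) else 0) =
      ∑ s : Finset (Fin T.card),
        if x ∈ s ∧ y ∉ s then
          DS D T.card (a ∘ T.orderEmbOfFin rfl) s * DS D T.card (a ∘ T.orderEmbOfFin rfl) sᶜ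
        else 0 := by
  have he := (T.orderEmbOfFin rfl).injective
  have hdiff (s : Finset (Fin T.card)) :
      T \ s.image (T.orderEmbOfFin rfl) = sᶜ.image (T.orderEmbOfFin rfl) := by
    rw [Finset.compl_eq_univ_sdiff, Finset.image_sdiff _ _ he, T.image_orderEmbOfFin_univ]
  rw [Finset.sum_ite_subset_and, Finset.sum_powerset_eq_sum_image_orderEmbOfFin]
  refine Finset.sum_congr rfl fun s _ => ?_
  simp only [hdiff, DS_image, he.mem_finset_image, Finset.mem_compl]

theorem sum_subset_DS_mul_DS_sdiff_comm
    (hquad : ∀ (n : ℕ) (a : Fin n → I) (i j : Fin n), i ≠ j →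
      (∑ s : Finset (Fin n),
          if i ∈ s ∧ j ∉ s then DS D n a s * DS D n a sᶜ else 0) =
      (∑ s : Finset (Fin n),
          if j ∈ s ∧ i ∉ s then DS D n a s * DS D n a sᶜ else 0))
    {n : ℕ} (a : Fin n → I) {T : Finset (Fin n)} {i j : Fin n}
    (hi : i ∈ T) (hj : j ∈ T) (hij : i ≠ j) :
    (∑ s : Finset (Fin n),
        if s ⊆ T ∧ i ∈ s ∧ j ∈ T \ s then DS D n a s * DS D n a (T \ s) else 0) =
      ∑ s : Finset (Fin n),
        if s ⊆ T ∧ j ∈ s ∧ i ∈ T \ s then DS D n a s * DS D n a (T \ s) else 0 := by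
  obtain ⟨x, rfl⟩ : i ∈ Set.range (T.orderEmbOfFin rfl) := (T.range_orderEmbOfFin rfl).ge hi
  obtain ⟨y, rfl⟩ : j ∈ Set.range (T.orderEmbOfFin rfl) := (T.range_orderEmbOfFin rfl).ge hj
  rw [sum_subset_DS_mul_DS_sdiff_eq, sum_subset_DS_mul_DS_sdiff_eq]
  exact hquad _ _ x y (ne_of_apply_ne _ hij)

end Correlators

theorem stmt_18_general {k F I : Type} [Field k] [AddCommGroup F] [Module k F]
    (D : ∀ n, (Fin n → I) → Module.End k F)
    (hquad : ∀ (n : ℕ) (a : Fin n → I) (i j : Fin n), i ≠ j →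
      (∑ s : Finset (Fin n),
          if i ∈ s ∧ j ∉ s then DS D n a s * DS D n a sᶜ else 0) =
      (∑ s : Finset (Fin n),
          if j ∈ s ∧ i ∉ s then DS D n a s * DS D n a sᶜ else 0)) :
    ∀ (n : ℕ) (a : Fin n → I) (N : ℕ) (τ : Fin (N + 1) → Finset (Fin n)),
      (∀ r, (τ r).Nonempty) → (∀ r r', r ≠ r' → Disjoint (τ r) (τ r')) →
      Finset.univ.biUnion τ = Finset.univ →
      ∀ (r : Fin (N + 1)) (i j : Fin n), i ∈ τ r → j ∈ τ r → i ≠ j →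
      (∑ s : Finset (Fin n),
          if s ⊆ τ r ∧ i ∈ s ∧ j ∈ τ r \ s then
            (List.ofFn fun c : Fin (N + 2) =>
              DS D n a ((refine τ r s (τ r \ s)) c)).prod
          else 0) =
      (∑ s : Finset (Fin n),
          if s ⊆ τ r ∧ j ∈ s ∧ i ∈ τ r \ s then
            (List.ofFn fun c : Fin (N + 2) =>
              DS D n a ((refine τ r s (τ r \ s)) c)).prod
          else 0) := by
  intro n a N τ _ _ _ r i j hi hj hij
  obtain ⟨L, R, hLR⟩ := exists_prod_ofFn_refine_eq (DS D n a) τ r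
  have h := congrArg (L * · * R) (sum_subset_DS_mul_DS_sdiff_comm D hquad a hi hj hij)
  simpa only [hLR, Finset.mul_sum, Finset.sum_mul, mul_ite, ite_mul, mul_zero, zero_mul] using h

/-- If the symmetric top correlators satisfy the quadratic relations
`∑_{σ: iσj} ⟨∏_{σ_1}Δ⟩⟨∏_{σ_2}Δ⟩ = ∑_{σ: jσi} ⟨∏_{σ_1}Δ⟩⟨∏_{σ_2}Δ⟩`, then the derived
correlators `τ⟨Δ_{a_1}…Δ_{a_n}⟩ = ∏_r ⟨∏_{k∈τ_r}Δ_{a_k}⟩` satisfy, for every ordered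
partition `τ`, every part `τ_r` and every `i ≠ j ∈ τ_r`, the linear relations
`∑_{α: iαj} τ(α)⟨…⟩ = ∑_{α: jαi} τ(α)⟨…⟩` with `α` running over 2-partitions of `τ_r`. -/
theorem stmt_18 {k F I : Type} [Field k] [CharZero k] [AddCommGroup F] [Module k F]
    (D : ∀ n, (Fin n → I) → Module.End k F)
    (hsym : ∀ (n : ℕ) (a : Fin n → I) (s : Equiv.Perm (Fin n)), D n (a ∘ s) = D n a)
    (hquad : ∀ (n : ℕ) (a : Fin n → I) (i j : Fin n), i ≠ j →
      (∑ s : Finset (Fin n),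
          if i ∈ s ∧ j ∉ s then DS D n a s * DS D n a sᶜ else 0) =
      (∑ s : Finset (Fin n),
          if j ∈ s ∧ i ∉ s then DS D n a s * DS D n a sᶜ else 0)) :
    ∀ (n : ℕ) (a : Fin n → I) (N : ℕ) (τ : Fin (N + 1) → Finset (Fin n)),
      (∀ r, (τ r).Nonempty) → (∀ r r', r ≠ r' → Disjoint (τ r) (τ r')) →
      Finset.univ.biUnion τ = Finset.univ →
      ∀ (r : Fin (N + 1)) (i j : Fin n), i ∈ τ r → j ∈ τ r → i ≠ j →
      (∑ s : Finset (Fin n),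
          if s ⊆ τ r ∧ i ∈ s ∧ j ∈ τ r \ s then
            (List.ofFn fun c : Fin (N + 2) =>
              DS D n a ((refine τ r s (τ r \ s)) c)).prod
          else 0) =
      (∑ s : Finset (Fin n),
          if s ⊆ τ r ∧ j ∈ s ∧ i ∈ τ r \ s then
            (List.ofFn fun c : Fin (N + 2) =>
              DS D n a ((refine τ r s (τ r \ s)) c)).prod
          else 0) :=
  stmt_18_general D hquad
end

section
/- Let k be a field of characteristic zero, F a finite-dimensional k-vector space, and for each n ≥ 1 and each tuple (a_1,...,a_n) of indices from a finite set I, let Δ(a_1,...,a_n) ∈ End F be symmetric in its arguments. Set B = ∑_{n≥1} ∑_{(a_1,...,a_n)} (x^{a_n}···x^{a_1}/n!) · Δ(a_1,...,a_n) as a formal power series in commuting variables (x^a)_{a∈I} with End F coefficients. Then the equation dB ∧ dB = 0 (i.e., ∂_a B · ∂_b B = ∂_b B · ∂_a B in End F ⊗ k[[x]] for all a, b ∈ I) is equivalent to the family of quadratic relations: for all n, all (a_1,...,a_n), and all i ≠ j ∈ {1,...,n}, ∑_{σ: iσj} Δ((a_k)_{k∈σ_1})·Δ((a_k)_{k∈σ_2})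 = ∑_{σ: jσi} Δ((a_k)_{k∈σ_1})·Δ((a_k)_{k∈σ_2}), where σ runs over 2-partitions of {1,...,n}. -/
/-- The formal partial derivative `∂_a` of a multivariate power series. -/
noncomputable def pd {I : Type} [DecidableEq I] {A : Type} [Ring A]
    (a : I) (B : MvPowerSeries I A) : MvPowerSeries I A :=
  fun d => (d a + 1) • MvPowerSeries.coeff (d + Finsupp.single a 1) B

open Finset MvPowerSeries
open Finsupp (single single_le_iff)

section PartialDerivative

variable {I A : Type} [Ring A]

/- `MvPowerSeries.pderiv` needs commutative coefficients. The Leibniz rule for `pd` is obtained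
instead from the Euler operator `x^a ∂_a`, for which it holds coefficientwise because
`(p + q) a = p a + q a`, by cancelling the factor `X a`. -/
noncomputable def eulerOp (a : I) (R : MvPowerSeries I A) : MvPowerSeries I A :=
  fun d => d a • coeff d R

theorem coeff_eulerOp (a : I) (R : MvPowerSeries I A) (d : I →₀ ℕ) :
    coeff d (eulerOp a R) = d a • coeff d R :=
  rfl

theorem eulerOp_mul (a : I) (P Q : MvPowerSeries I A) :
    eulerOp a (P * Q) = eulerOp a P * Q + P * eulerOp a Q := by
  classical
  ext d
  rw [map_add, coeff_eulerOp, coeff_mul, coeff_mul, coeff_mul, ← sum_add_distrib, Finset.smul_sum]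
  refine sum_congr rfl fun p hp => ?_
  rw [coeff_eulerOp, coeff_eulerOp, smul_mul_assoc, mul_smul_comm, ← add_smul,
    ← mem_antidiagonal.mp hp, Finsupp.add_apply]

theorem X_mul_injective (a : I) : Function.Injective (X a * · : MvPowerSeries I A → _) := by
  intro S T h
  ext d
  have h' := congrArg (coeff (single a 1 + d)) h
  dsimp only at h'
  rwa [X, coeff_add_monomial_mul, coeff_add_monomial_mul, one_mul, one_mul] at h'

variable [DecidableEq I]

theorem coeff_pd (a : I) (R : MvPowerSeries I A) (d : I →₀ ℕ) :
    coeff d (pd a R) = (d a + 1) • coeff (d + single a 1) R :=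
  rfl

theorem X_mul_pd (a : I) (R : MvPowerSeries I A) : X a * pd a R = eulerOp a R := by
  ext d
  rw [X, coeff_monomial_mul, coeff_eulerOp, one_mul]
  split_ifs with h
  · rw [coeff_pd, tsub_add_cancel_of_le h, Finsupp.tsub_apply, Finsupp.single_eq_same,
      Nat.sub_add_cancel (single_le_iff.mp h)]
  · rw [single_le_iff, Nat.one_le_iff_ne_zero, not_not] at h
    rw [h, zero_smul]

theorem pd_mul (a : I) (P Q : MvPowerSeries I A) : pd a (P * Q) = pd a P * Q + P * pd a Q := by
  apply X_mul_injective a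
  dsimp only
  rw [mul_add, X_mul_pd, ← mul_assoc, X_mul_pd, ← mul_assoc, X_mul, mul_assoc, X_mul_pd,
    eulerOp_mul]

end PartialDerivative

section FactorialCoeff

variable {I A : Type} [Ring A]

theorem prod_factorial_add_single [DecidableEq I] (d : I →₀ ℕ) (a : I) :
    ((d + single a 1).prod fun _ m => m.factorial) =
      (d a + 1) * d.prod fun _ m => m.factorial := by
  rw [← Finsupp.mul_prod_erase' d a _ fun _ => Nat.factorial_zero,
    ← Finsupp.mul_prod_erase' _ a _ fun _ => Nat.factorial_zero, Finsupp.erase_add,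
    Finsupp.erase_single, add_zero, Finsupp.add_apply, Finsupp.single_eq_same,
    Nat.factorial_succ, mul_assoc]

noncomputable def factorialCoeff (d : I →₀ ℕ) (R : MvPowerSeries I A) : A :=
  (d.prod fun _ m => m.factorial) • coeff d R

theorem factorialCoeff_add_single [DecidableEq I] (d : I →₀ ℕ) (a : I) (R : MvPowerSeries I A) :
    factorialCoeff (d + single a 1) R = factorialCoeff d (pd a R) := by
  rw [factorialCoeff, factorialCoeff, coeff_pd, prod_factorial_add_single, mul_comm, mul_smul]

theorem factorialCoeff_add (d : I →₀ ℕ) (P Q : MvPowerSeries I A) :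
    factorialCoeff d (P + Q) = factorialCoeff d P + factorialCoeff d Q := by
  simp only [factorialCoeff, map_add, smul_add]

theorem factorialCoeff_zero_mul (P Q : MvPowerSeries I A) :
    factorialCoeff 0 (P * Q) = factorialCoeff 0 P * factorialCoeff 0 Q := by
  simp only [factorialCoeff, Finsupp.prod_zero_index, one_smul,
    coeff_zero_eq_constantCoeff_apply, map_mul]

theorem coeff_eq_of_factorialCoeff_eq (k : Type) [DivisionRing k] [CharZero k] [Module k A]
    {d : I →₀ ℕ} {P Q : MvPowerSeries I A} (h : factorialCoeff d P = factorialCoeff d Q) :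
    coeff d P = coeff d Q := by
  have hd : (d.prod fun _ m => m.factorial) ≠ 0 :=
    Finset.prod_ne_zero_iff.mpr fun _ _ => Nat.factorial_ne_zero _
  rw [factorialCoeff, factorialCoeff, ← Nat.cast_smul_eq_nsmul k, ← Nat.cast_smul_eq_nsmul k] at h
  exact smul_right_injective A (Nat.cast_ne_zero.mpr hd) h

end FactorialCoeff

section MultiIndex

variable {α I : Type}

noncomputable def multiIndex (a : α → I) (s : Finset α) : I →₀ ℕ :=
  ∑ x ∈ s, single (a x) 1

theorem multiIndex_insert [DecidableEq α] (a : α → I) {x : α} {s : Finset α} (hx : x ∉ s) :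
    multiIndex a (insert x s) = multiIndex a s + single (a x) 1 := by
  rw [multiIndex, sum_insert hx, add_comm, multiIndex]

theorem toMultiset_multiIndex (a : α → I) (s : Finset α) :
    (multiIndex a s).toMultiset = s.val.map a := by
  induction s using Finset.cons_induction with
  | empty => simp [multiIndex]
  | cons x s hx ih => simp [multiIndex, ← ih]

theorem multiIndex_ne_zero (a : α → I) {s : Finset α} (hs : s.Nonempty) : multiIndex a s ≠ 0 := by
  intro h
  have := toMultiset_multiIndex a s
  simp_all

theorem factorialCoeff_multiIndex_mul [DecidableEq α] [DecidableEq I] {A : Type} [Ring A]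
    (a : α → I) (U : Finset α) (P Q : MvPowerSeries I A) :
    factorialCoeff (multiIndex a U) (P * Q) = ∑ t ∈ U.powerset,
      factorialCoeff (multiIndex a t) P * factorialCoeff (multiIndex a (U \ t)) Q := by
  induction U using Finset.induction_on generalizing P Q with
  | empty => simp [multiIndex, factorialCoeff_zero_mul]
  | insert x U hx ih =>
    rw [multiIndex_insert a hx, factorialCoeff_add_single, pd_mul, factorialCoeff_add, ih, ih,
      sum_powerset_insert hx, add_comm]
    congr 1 <;> refine sum_congr rfl fun t ht => ?_
    · have hxt : x ∉ t := fun h => hx (mem_powerset.mp ht h)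
      rw [insert_sdiff_of_notMem _ hxt, multiIndex_insert a (fun h => hx (mem_sdiff.mp h).1),
        factorialCoeff_add_single]
    · have hxt : x ∉ t := fun h => hx (mem_powerset.mp ht h)
      rw [insert_sdiff_insert, sdiff_insert_of_notMem hx, multiIndex_insert a hxt,
        factorialCoeff_add_single]

theorem multiIndex_get_toList_univ [DecidableEq I] (d : I →₀ ℕ) :
    multiIndex d.toMultiset.toList.get univ = d := by
  rw [← Finsupp.toMultiset_toFinsupp (multiIndex _ _), toMultiset_multiIndex, Fin.univ_val_map,
    List.ofFn_get, Multiset.coe_toList, Finsupp.toMultiset_toFinsupp]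

theorem exists_multiIndex_compl_pair [DecidableEq I] (a b : I) (d : I →₀ ℕ) :
    ∃ (n : ℕ) (f : Fin n → I) (i j : Fin n),
      i ≠ j ∧ f i = a ∧ f j = b ∧ multiIndex f {i, j}ᶜ = d := by
  set L := d.toMultiset.toList
  let f : Fin (L.length + 2) → I := Fin.cons a (Fin.cons b L.get)
  have h01 : (0 : Fin (L.length + 2)) ≠ 1 := by simp
  refine ⟨_, f, 0, 1, h01, rfl, rfl, add_left_cancel (a := single a 1 + single b 1) ?_⟩
  have hsplit := sum_add_sum_compl {0, 1} fun t => single (f t) 1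
  rw [sum_pair h01, Fin.sum_univ_succ, Fin.sum_univ_succ] at hsplit
  rw [multiIndex, ← multiIndex_get_toList_univ d, multiIndex]
  exact hsplit.trans (add_assoc _ _ _).symm

end MultiIndex

theorem exists_eq_comp_perm_of_perm_ofFn {β : Type} {n : ℕ} {f g : Fin n → β}
    (h : (List.ofFn f).Perm (List.ofFn g)) : ∃ σ : Equiv.Perm (Fin n), f = g ∘ σ := by
  -- sorted along any linear order, the two tuples agree
  let : LinearOrder β := IsWellOrder.linearOrder WellOrderingRel
  have hsort : f ∘ Tuple.sort f = g ∘ Tuple.sort g :=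
    List.ofFn_inj.mp <| List.Perm.eq_of_sortedLE (Tuple.monotone_sort f).sortedLE_ofFn
      (Tuple.monotone_sort g).sortedLE_ofFn <|
      ((Tuple.sort f).ofFn_comp_perm f).trans (h.trans ((Tuple.sort g).ofFn_comp_perm g).symm)
  refine ⟨(Tuple.sort f).symm.trans (Tuple.sort g), funext fun i => ?_⟩
  simpa using congrFun hsort ((Tuple.sort f).symm i)

theorem sum_ite_mem_notMem_eq_sum_powerset {α M : Type} [Fintype α] [DecidableEq α]
    [AddCommMonoid M] {i j : α} (hij : i ≠ j) (g : Finset α → M) :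
    (∑ s, if i ∈ s ∧ j ∉ s then g s else 0) =
      ∑ t ∈ ({i, j}ᶜ : Finset α).powerset, g (insert i t) := by
  rw [← sum_filter]
  refine (sum_nbij' (insert i) (fun s => s.erase i) ?_ ?_ ?_ ?_ fun _ _ => rfl).symm <;>
    intro t ht <;>
    simp only [mem_powerset, mem_filter, subset_iff, mem_compl, mem_insert, mem_singleton,
      mem_univ, true_and] at ht ⊢ <;>
    grind

section Correlators

variable {k F I : Type} [Field k] [AddCommGroup F] [Module k F]

theorem apply_eq_of_perm_ofFn {D : ∀ n, (Fin n → I) → Module.End k F}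
    (hsym : ∀ (n : ℕ) (a : Fin n → I) (s : Equiv.Perm (Fin n)), D n (a ∘ s) = D n a)
    {n₁ n₂ : ℕ} {f : Fin n₁ → I} {g : Fin n₂ → I} (h : (List.ofFn f).Perm (List.ofFn g)) :
    D n₁ f = D n₂ g := by
  obtain rfl : n₁ = n₂ := by simpa using h.length_eq
  obtain ⟨σ, rfl⟩ := exists_eq_comp_perm_of_perm_ofFn h
  exact hsym _ g σ

theorem DS_eq_factorialCoeff [DecidableEq I] {D : ∀ n, (Fin n → I) → Module.End k F}
    (hsym : ∀ (n : ℕ) (a : Fin n → I) (s : Equiv.Perm (Fin n)), D n (a ∘ s) = D n a)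
    {B : MvPowerSeries I (Module.End k F)}
    (hB : ∀ d : I →₀ ℕ, d ≠ 0 →
      (d.prod fun _ m => m.factorial) • MvPowerSeries.coeff d B =
        D d.toMultiset.toList.length (fun t => d.toMultiset.toList.get t))
    {n : ℕ} (a : Fin n → I) {s : Finset (Fin n)} (hs : s.Nonempty) :
    DS D n a s = factorialCoeff (multiIndex a s) B := by
  rw [factorialCoeff, hB _ (multiIndex_ne_zero a hs), DS]
  refine apply_eq_of_perm_ofFn hsym (Multiset.coe_eq_coe.mp ?_)
  have hval : s.val = univ.val.map (s.orderEmbOfFin rfl) := by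
    conv_lhs => rw [← s.map_orderEmbOfFin_univ rfl]
    rfl
  rw [List.ofFn_get, Multiset.coe_toList, toMultiset_multiIndex, ← Fin.univ_val_map, hval,
    Multiset.map_map]
  rfl

theorem sum_DS_mul_DS_compl_eq_factorialCoeff [DecidableEq I]
    {D : ∀ n, (Fin n → I) → Module.End k F}
    (hsym : ∀ (n : ℕ) (a : Fin n → I) (s : Equiv.Perm (Fin n)), D n (a ∘ s) = D n a)
    {B : MvPowerSeries I (Module.End k F)}
    (hB : ∀ d : I →₀ ℕ, d ≠ 0 →
      (d.prod fun _ m => m.factorial) • MvPowerSeries.coeff d B =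
        D d.toMultiset.toList.length (fun t => d.toMultiset.toList.get t))
    {n : ℕ} (a : Fin n → I) {i j : Fin n} (hij : i ≠ j) :
    (∑ s : Finset (Fin n), if i ∈ s ∧ j ∉ s then DS D n a s * DS D n a sᶜ else 0) =
      factorialCoeff (multiIndex a {i, j}ᶜ) (pd (a i) B * pd (a j) B) := by
  rw [sum_ite_mem_notMem_eq_sum_powerset hij, factorialCoeff_multiIndex_mul]
  refine sum_congr rfl fun t ht => ?_
  rw [mem_powerset, subset_iff] at ht
  have hit : i ∉ t := fun h => by simpa using ht h
  have hjt : j ∉ {i, j}ᶜ \ t := by simp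
  have hcompl : (insert i t)ᶜ = insert j ({i, j}ᶜ \ t) := by
    ext x
    simp only [mem_compl, mem_insert, mem_sdiff, mem_singleton] at ht ⊢
    grind
  rw [hcompl, DS_eq_factorialCoeff hsym hB a (insert_nonempty _ _),
    DS_eq_factorialCoeff hsym hB a (insert_nonempty _ _), multiIndex_insert a hit,
    multiIndex_insert a hjt, factorialCoeff_add_single, factorialCoeff_add_single]

end Correlators

theorem stmt_19_general {k F I : Type} [Field k] [CharZero k] [AddCommGroup F] [Module k F]
    [DecidableEq I]
    (D : ∀ n, (Fin n → I) → Module.End k F)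
    (hsym : ∀ (n : ℕ) (a : Fin n → I) (s : Equiv.Perm (Fin n)), D n (a ∘ s) = D n a)
    (B : MvPowerSeries I (Module.End k F))
    (hB : ∀ d : I →₀ ℕ, d ≠ 0 →
      (d.prod fun _ m => m.factorial) • MvPowerSeries.coeff d B =
        D d.toMultiset.toList.length (fun t => d.toMultiset.toList.get t)) :
    (∀ a b : I, pd a B * pd b B = pd b B * pd a B) ↔
    (∀ (n : ℕ) (a : Fin n → I) (i j : Fin n), i ≠ j →
      (∑ s : Finset (Fin n),
          if i ∈ s ∧ j ∉ s then DS D n a s * DS D n a sᶜ else 0) =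
      (∑ s : Finset (Fin n),
          if j ∈ s ∧ i ∉ s then DS D n a s * DS D n a sᶜ else 0)) := by
  constructor
  · intro hcomm n a i j hij
    rw [sum_DS_mul_DS_compl_eq_factorialCoeff hsym hB a hij,
      sum_DS_mul_DS_compl_eq_factorialCoeff hsym hB a hij.symm, pair_comm, hcomm]
  · intro hrel a b
    refine MvPowerSeries.ext fun d => ?_
    obtain ⟨n, f, i, j, hij, rfl, rfl, rfl⟩ := exists_multiIndex_compl_pair a b d
    have h := hrel n f i j hij
    rw [sum_DS_mul_DS_compl_eq_factorialCoeff hsym hB f hij,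
      sum_DS_mul_DS_compl_eq_factorialCoeff hsym hB f hij.symm, pair_comm j i] at h
    exact coeff_eq_of_factorialCoeff_eq k h

/-- For `B = ∑_{n≥1} ∑_{(a_1,…,a_n)} (x^{a_n}···x^{a_1}/n!)·Δ(a_1,…,a_n)` (encoded by
`n!`-cleared coefficients: `(∏_a d_a!)·coeff_d B = Δ` on the canonical tuple of the
monomial `d`), the Commutativity Equations `∂_a B · ∂_b B = ∂_b B · ∂_a B` hold for all
`a, b` iff the quadratic relations
`∑_{σ: iσj} Δ((a_k)_{k∈σ_1})·Δ((a_k)_{k∈σ_2}) = ∑_{σ: jσi} Δ((a_k)_{k∈σ_1})·Δ((a_k)_{k∈σ_2})`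
hold for all `n`, `(a_1,…,a_n)` and `i ≠ j`. -/
theorem stmt_19 {k F I : Type} [Field k] [CharZero k] [AddCommGroup F] [Module k F]
    [FiniteDimensional k F] [Fintype I] [DecidableEq I]
    (D : ∀ n, (Fin n → I) → Module.End k F)
    (hsym : ∀ (n : ℕ) (a : Fin n → I) (s : Equiv.Perm (Fin n)), D n (a ∘ s) = D n a)
    (B : MvPowerSeries I (Module.End k F))
    (hB0 : MvPowerSeries.coeff 0 B = 0)
    (hB : ∀ d : I →₀ ℕ, d ≠ 0 →
      (d.prod fun _ m => m.factorial) • MvPowerSeries.coeff d B =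
        D d.toMultiset.toList.length (fun t => d.toMultiset.toList.get t)) :
    (∀ a b : I, pd a B * pd b B = pd b B * pd a B) ↔
    (∀ (n : ℕ) (a : Fin n → I) (i j : Fin n), i ≠ j →
      (∑ s : Finset (Fin n),
          if i ∈ s ∧ j ∉ s then DS D n a s * DS D n a sᶜ else 0) =
      (∑ s : Finset (Fin n),
          if j ∈ s ∧ i ∉ s then DS D n a s * DS D n a sᶜ else 0)) :=
  stmt_19_general D hsym B hB
end
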